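/- Let μ, ν > 0 and define Ψ : ℝ → ℝ by Ψ(t) = (ν²/(μ²+ν²))·e^{μt} for t ≤ 0 and Ψ(t) = 1 − (μ²/(μ²+ν²))·e^{−νt} for t > 0. Then Ψ satisfies the fixed-point equation: Ψ(t) = μν·e^{μt}·∫₀^∞∫₀^∞ Ψ(u − v)·e^{−μu−νv} du dv for all t ≤ 0, and Ψ(t) = μν·e^{−νt}·∫₀^∞∫₀^∞ Ψ(u − v)·e^{−μu−νv} du dv + 1 − e^{−νt} for all t > 0. -/

import Mathlib

/-!
For `u ≥ 0` the inner integral splits at `v = u`, where `Ψ (u - v)` changes branch. On each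
piece the integrand is a combination of exponentials, plus `u * exp (-(μ + ν) * u)` coming from
the constant branch integrated over an interval of length `u`; so the double integral evaluates
in closed form to `ν / (μ * (μ ^ 2 + ν ^ 2))`, and both fixed-point identities become algebraic
identities in `exp (μ * t)` and `exp (-ν * t)`.
-/

open MeasureTheory Set Real

lemma integral_exp_neg_mul_Ioi {b : ℝ} (hb : 0 < b) (c : ℝ) :
    ∫ x in Ioi c, exp (-b * x) = exp (-b * c) / b := by
  rw [integral_exp_mul_Ioi (neg_neg_of_pos hb), neg_div_neg_eq]

lemma integral_exp_neg_mul_Ioc {b u : ℝ} (hb : b ≠ 0) (hu : 0 ≤ u) :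
    ∫ x in Ioc 0 u, exp (-b * x) = (1 - exp (-b * u)) / b := by
  rw [← intervalIntegral.integral_of_le hu,
    intervalIntegral.integral_comp_mul_left (fun x => exp x) (neg_ne_zero.mpr hb),
    integral_exp, mul_zero, exp_zero, smul_eq_mul]
  field_simp
  ring

lemma integrableOn_mul_exp_neg_mul_Ioi {b : ℝ} (hb : 0 < b) :
    IntegrableOn (fun x => x * exp (-b * x)) (Ioi 0) := by
  refine (integrableOn_rpow_mul_exp_neg_mul_rpow (s := 1) (p := 1) (by norm_num) one_pos
    hb).congr_fun (fun x _ => ?_) measurableSet_Ioi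
  simp

lemma integral_mul_exp_neg_mul_Ioi {b : ℝ} (hb : 0 < b) :
    ∫ x in Ioi 0, x * exp (-b * x) = 1 / b ^ 2 := by
  have h := integral_rpow_mul_exp_neg_mul_Ioi two_pos hb
  norm_num [Gamma_two] at h
  simpa [neg_mul] using h

noncomputable def psi (μ ν t : ℝ) : ℝ :=
  if t ≤ 0 then ν^2/(μ^2+ν^2) * exp (μ*t) else 1 - μ^2/(μ^2+ν^2) * exp (-ν*t)

lemma psi_of_nonpos {μ ν t : ℝ} (ht : t ≤ 0) : psi μ ν t = ν^2/(μ^2+ν^2) * exp (μ*t) :=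
  if_pos ht

lemma psi_of_nonneg {μ ν t : ℝ} (hν : ν ≠ 0) (ht : 0 ≤ t) :
    psi μ ν t = 1 - μ^2/(μ^2+ν^2) * exp (-ν*t) := by
  rcases ht.eq_or_lt with rfl | ht
  · have : μ^2 + ν^2 ≠ 0 := by positivity
    simp only [psi_of_nonpos le_rfl, mul_zero, exp_zero]
    field_simp
    ring
  · exact if_neg ht.not_ge

lemma integral_psi_sub_mul_exp {μ ν u : ℝ} (hμ : 0 < μ) (hν : 0 < ν) (hu : 0 ≤ u) :
    ∫ v in Ioi 0, psi μ ν (u - v) * exp (-μ*u - ν*v) =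
      exp (-μ*u) / ν + (ν^2/(μ^2+ν^2)/(μ+ν) - 1/ν) * exp (-(μ+ν)*u)
        - μ^2/(μ^2+ν^2) * (u * exp (-(μ+ν)*u)) := by
  have hμν : 0 < μ + ν := by linarith
  have near : EqOn (fun v => psi μ ν (u - v) * exp (-μ*u - ν*v))
      (fun v => exp (-μ*u) * exp (-ν*v) - μ^2/(μ^2+ν^2) * exp (-(μ+ν)*u)) (Ioc 0 u) :=
    fun v hv => by
      dsimp only
      rw [psi_of_nonneg hν.ne' (sub_nonneg.mpr hv.2), sub_mul, one_mul, mul_assoc,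
        ← exp_add, ← exp_add]
      congr 3 <;> ring
  have far : EqOn (fun v => psi μ ν (u - v) * exp (-μ*u - ν*v))
      (fun v => ν^2/(μ^2+ν^2) * exp (-(μ+ν)*v)) (Ioi u) := fun v hv => by
    dsimp only
    rw [psi_of_nonpos (sub_nonpos.mpr (le_of_lt hv)), mul_assoc, ← exp_add]
    congr 2; ring
  have near_int : IntegrableOn
      (fun v => exp (-μ*u) * exp (-ν*v) - μ^2/(μ^2+ν^2) * exp (-(μ+ν)*u)) (Ioc 0 u) :=
    Continuous.integrableOn_Ioc (by fun_prop)
  have far_int : IntegrableOn (fun v => ν^2/(μ^2+ν^2) * exp (-(μ+ν)*v)) (Ioi u) :=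
    (exp_neg_integrableOn_Ioi u hμν).const_mul _
  rw [← Ioc_union_Ioi_eq_Ioi hu, setIntegral_union (Ioc_disjoint_Ioi le_rfl) measurableSet_Ioi
      (near_int.congr_fun near.symm measurableSet_Ioc)
      (far_int.congr_fun far.symm measurableSet_Ioi),
    setIntegral_congr_fun measurableSet_Ioc near, setIntegral_congr_fun measurableSet_Ioi far,
    integral_sub (Continuous.integrableOn_Ioc (by fun_prop)) (integrable_const _),
    integral_const_mul, integral_exp_neg_mul_Ioc hν.ne' hu, setIntegral_const,
    Real.volume_real_Ioc_of_le hu, sub_zero, smul_eq_mul, integral_const_mul,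
    integral_exp_neg_mul_Ioi hμν]
  have hE : exp (-μ*u) * exp (-ν*u) = exp (-(μ+ν)*u) := by rw [← exp_add]; ring_nf
  have hA : μ^2 + ν^2 ≠ 0 := by positivity
  rw [← hE]
  field_simp
  ring

lemma integral_integral_psi_sub_mul_exp {μ ν : ℝ} (hμ : 0 < μ) (hν : 0 < ν) :
    ∫ u in Ioi 0, ∫ v in Ioi 0, psi μ ν (u - v) * exp (-μ*u - ν*v) =
      ν / (μ * (μ^2+ν^2)) := by
  have hμν : 0 < μ + ν := by linarith
  rw [setIntegral_congr_fun measurableSet_Ioi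
    fun u hu => integral_psi_sub_mul_exp hμ hν (le_of_lt hu)]
  have h₁ := (exp_neg_integrableOn_Ioi 0 hμ).div_const ν
  have h₂ := (exp_neg_integrableOn_Ioi 0 hμν).const_mul (ν^2/(μ^2+ν^2)/(μ+ν) - 1/ν)
  have h₃ := (integrableOn_mul_exp_neg_mul_Ioi hμν).const_mul (μ^2/(μ^2+ν^2))
  rw [integral_sub (by exact h₁.add h₂) h₃, integral_add h₁ h₂, integral_div,
    integral_const_mul, integral_const_mul, integral_exp_neg_mul_Ioi hμ,
    integral_exp_neg_mul_Ioi hμν,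
    integral_mul_exp_neg_mul_Ioi hμν]
  simp only [mul_zero, exp_zero]
  have hA : μ^2 + ν^2 ≠ 0 := by positivity
  field_simp
  ring

/-- The limiting distribution function `Ψ` satisfies the fixed-point
equation of the one-step recursion. -/
theorem limiting_psi_fixed_point (μ ν : ℝ) (hμ : 0 < μ) (hν : 0 < ν)
    (Ψ : ℝ → ℝ)
    (hΨ : ∀ t : ℝ, Ψ t = if t ≤ 0 then ν^2/(μ^2+ν^2) * Real.exp (μ*t)
      else 1 - μ^2/(μ^2+ν^2) * Real.exp (-ν*t)) :
    (∀ t : ℝ, t ≤ 0 → Ψ t =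
      μ * ν * Real.exp (μ*t) *
        ∫ u in Set.Ioi (0:ℝ), ∫ v in Set.Ioi (0:ℝ), Ψ (u - v) * Real.exp (-μ*u - ν*v)) ∧
    (∀ t : ℝ, 0 < t → Ψ t =
      μ * ν * Real.exp (-ν*t) *
        (∫ u in Set.Ioi (0:ℝ), ∫ v in Set.Ioi (0:ℝ), Ψ (u - v) * Real.exp (-μ*u - ν*v))
        + 1 - Real.exp (-ν*t)) := by
  obtain rfl : Ψ = psi μ ν := funext hΨ
  rw [integral_integral_psi_sub_mul_exp hμ hν]
  have hA : μ^2 + ν^2 ≠ 0 := by positivity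
  refine ⟨fun t ht => ?_, fun t ht => ?_⟩
  · rw [psi_of_nonpos ht]
    field_simp
  · rw [psi_of_nonneg hν.ne' ht.le]
    field_simp
    ring
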